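/- Let β ∈ (0,1], C > 0, a ≠ 0, and let θ : (0,∞) → ℝ be locally absolutely continuous with |θ′(t) − a| ≤ C/t^β for a.e. t ∈ (0,∞). Then for any x ≥ x₀ > s(|a|,β,C) = (100C·|a|^{β−1} + 10⁴)^{1/β}·|a|^{−1}, both |∫_{x₀}^x sin θ(t)/t dt| ≤ r(|a|,β,C)/(|a|^β·x₀^β) and |∫_{x₀}^x cos θ(t)/t dt| ≤ r(|a|,β,C)/(|a|^β·x₀^β), where r(|a|,β,C) = 30C·β^{−1}·|a|^{β−1} + 10π. -/

import Mathlib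

open MeasureTheory Real Set

noncomputable section

/-- `s(α,β,C) = (100·C·α^{β-1} + 10⁴)^{1/β}·α⁻¹`. -/
def sConst (α β C : ℝ) : ℝ := (100 * C * α ^ (β - 1) + 10 ^ 4) ^ (1 / β) / α

/-- `r(α,β,C) = 30·C·β⁻¹·α^{β-1} + 10π`. -/
def rConst (α β C : ℝ) : ℝ := 30 * C / β * α ^ (β - 1) + 10 * π

/-!
Put `δ = π / |a|` and `f t = g (θ t) / t` for `g = sin, cos`. Over a step of length `δ` the phase
`θ` advances by `a δ = ±π` up to an error `C δ / t ^ β`, and `g` is `π`-antiperiodic and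
1-Lipschitz, so `f t + f (t + δ) = O(δ / t² + C δ / t ^ (1 + β))`. Writing `2 ∫_{x₀}^x f` as the
integral of this pair sum over `[x₀, x - δ]` plus two end pieces of length `δ` gives
`|∫_{x₀}^x f| ≤ 3δ / (2x₀) + C δ / (2β x₀ ^ β)`, and `x₀ > s` forces `|a| x₀ ≥ 1`, which turns
this into the bound `r / (|a| x₀) ^ β`.
-/

theorem integral_rpow_neg_one_sub_le {p q γ : ℝ} (hγ : 0 < γ) (hp : 0 < p) (hpq : p ≤ q) :
    ∫ t in p..q, t ^ (-1 - γ) ≤ 1 / (γ * p ^ γ) := by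
  have h0 : (0 : ℝ) ∉ uIcc p q := by
    rw [uIcc_of_le hpq]
    exact fun h => hp.not_ge h.1
  rw [integral_rpow (Or.inr ⟨by linarith, h0⟩), show -1 - γ + 1 = -γ by ring,
    rpow_neg hp.le, rpow_neg (hp.trans_le hpq).le]
  calc ((q ^ γ)⁻¹ - (p ^ γ)⁻¹) / -γ = ((p ^ γ)⁻¹ - (q ^ γ)⁻¹) / γ := by ring
    _ ≤ (p ^ γ)⁻¹ / γ := by
      have : 0 ≤ (q ^ γ)⁻¹ := by have := hp.trans_le hpq; positivity
      gcongr; exact sub_le_self _ this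
    _ = 1 / (γ * p ^ γ) := by field_simp

theorem abs_sub_sub_mul_sub_le {θ θ' : ℝ → ℝ} {a β C s t : ℝ} (hβ : 0 ≤ β) (hC : 0 ≤ C)
    (hs : 0 < s) (hst : s ≤ t) (hAC : θ t - θ s = ∫ u in s..t, θ' u)
    (hInt : IntervalIntegrable θ' volume s t)
    (hbd : ∀ᵐ u ∂volume, 0 < u → |θ' u - a| ≤ C / u ^ β) :
    |θ t - θ s - a * (t - s)| ≤ C / s ^ β * (t - s) := by
  have hdev : θ t - θ s - a * (t - s) = ∫ u in s..t, (θ' u - a) := by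
    rw [intervalIntegral.integral_sub hInt intervalIntegrable_const, ← hAC,
      intervalIntegral.integral_const, smul_eq_mul, mul_comm]
  rw [hdev, ← Real.norm_eq_abs, ← abs_of_nonneg (sub_nonneg.2 hst)]
  refine intervalIntegral.norm_integral_le_of_norm_le_const_ae ?_
  filter_upwards [hbd] with u hu hmem
  rw [uIoc_of_le hst] at hmem
  have hu0 : 0 < u := hs.trans hmem.1
  calc ‖θ' u - a‖ ≤ C / u ^ β := hu hu0
    _ ≤ C / s ^ β := by gcongr; exact hmem.1.le

theorem continuousOn_Icc_of_sub_eq_integral {θ θ' : ℝ → ℝ} {s x : ℝ} (hsx : s ≤ x)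
    (hAC : ∀ t ∈ Icc s x, θ t - θ s = ∫ u in s..t, θ' u)
    (hInt : IntervalIntegrable θ' volume s x) : ContinuousOn θ (Icc s x) := by
  have hprim := intervalIntegral.continuousOn_primitive_interval' hInt left_mem_uIcc
  rw [uIcc_of_le hsx] at hprim
  exact ((continuousOn_const (c := θ s)).add hprim).congr fun t ht => by
    simp only [Pi.add_apply]; linarith [hAC t ht]

theorem abs_div_add_div_le_of_antiperiodic {g : ℝ → ℝ} {c u v t δ : ℝ} (hg : ∀ y, |g y| ≤ 1)
    (hgL : LipschitzWith 1 g) (hgc : Function.Antiperiodic g c) (ht : 0 < t) (hδ : 0 ≤ δ) :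
    |g u / t + g v / (t + δ)| ≤ δ / t ^ 2 + |v - (u + c)| / t := by
  have htδ : 0 < t + δ := by linarith
  have hsplit : g u / t + g v / (t + δ)
      = g u * (δ / (t * (t + δ))) + (g v - g (u + c)) / (t + δ) := by
    rw [hgc u]; field_simp; ring
  have hL : |g v - g (u + c)| ≤ |v - (u + c)| := by
    simpa [Real.dist_eq] using hgL.dist_le_mul v (u + c)
  rw [hsplit]
  calc _ ≤ |g u * (δ / (t * (t + δ)))| + |(g v - g (u + c)) / (t + δ)| := abs_add_le _ _
    _ ≤ 1 * (δ / (t * t)) + |v - (u + c)| / t := by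
        rw [abs_mul, abs_of_nonneg (by positivity : 0 ≤ δ / (t * (t + δ))), abs_div,
          abs_of_pos htδ]
        gcongr
        · exact hg u
        · linarith
        · linarith
    _ = δ / t ^ 2 + |v - (u + c)| / t := by ring

theorem abs_integral_le_mul_sub_of_abs_le {f : ℝ → ℝ} {p q M : ℝ} (hpq : p ≤ q)
    (hM : ∀ t ∈ Icc p q, |f t| ≤ M) : |∫ t in p..q, f t| ≤ M * (q - p) := by
  have := intervalIntegral.norm_integral_le_of_norm_le_const (a := p) (b := q) (f := f) (C := M)
    fun t ht => hM t (Ioc_subset_Icc_self (uIoc_of_le hpq ▸ ht))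
  rwa [Real.norm_eq_abs, abs_of_nonneg (sub_nonneg.2 hpq)] at this

theorem two_mul_abs_integral_le_of_abs_add_shift_le {f b : ℝ → ℝ} {x₀ x δ M : ℝ}
    (hδ : 0 ≤ δ) (hxδ : x₀ + δ ≤ x) (hf : IntervalIntegrable f volume x₀ x)
    (hM : ∀ t ∈ Icc x₀ x, |f t| ≤ M) (hb : ∀ t ∈ Icc x₀ (x - δ), |f t + f (t + δ)| ≤ b t)
    (hbi : IntervalIntegrable b volume x₀ (x - δ)) :
    2 * |∫ t in x₀..x, f t| ≤ 2 * (M * δ) + ∫ t in x₀..(x - δ), b t := by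
  have hsub : ∀ {p q}, x₀ ≤ p → p ≤ q → q ≤ x → IntervalIntegrable f volume p q :=
    fun h1 h2 h3 => hf.mono_set <| by
      rw [uIcc_of_le h2, uIcc_of_le (h1.trans (h2.trans h3))]
      exact Icc_subset_Icc h1 h3
  have hend : ∀ {p q}, x₀ ≤ p → p ≤ q → q ≤ x → |∫ t in p..q, f t| ≤ M * (q - p) :=
    fun h1 h2 h3 => abs_integral_le_mul_sub_of_abs_le h2 fun t ht =>
      hM t ⟨h1.trans ht.1, ht.2.trans h3⟩
  have hshift : ∫ t in x₀..(x - δ), f (t + δ) = ∫ t in (x₀ + δ)..x, f t := by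
    rw [intervalIntegral.integral_comp_add_right f δ, sub_add_cancel]
  have hsplit_left := intervalIntegral.integral_add_adjacent_intervals
    (hsub le_rfl (by linarith) hxδ) (hsub (by linarith) hxδ le_rfl)
  have hsplit_right := intervalIntegral.integral_add_adjacent_intervals (b := x - δ)
    (hsub le_rfl (by linarith) (by linarith)) (hsub (by linarith) (by linarith) le_rfl)
  have hpair := intervalIntegral.integral_add (hsub (q := x - δ) le_rfl (by linarith) (by linarith))
    (by simpa using (hsub (p := x₀ + δ) (by linarith) hxδ le_rfl).comp_add_right δ)
  have hdouble : 2 * ∫ t in x₀..x, f t = (∫ t in x₀..(x₀ + δ), f t) + (∫ t in (x - δ)..x, f t)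
      + ∫ t in x₀..(x - δ), (f t + f (t + δ)) := by
    rw [hpair, hshift]
    linear_combination -hsplit_left - hsplit_right
  have hmid : |∫ t in x₀..(x - δ), (f t + f (t + δ))| ≤ ∫ t in x₀..(x - δ), b t := by
    rw [← Real.norm_eq_abs]
    exact intervalIntegral.norm_integral_le_of_norm_le (by linarith)
        (ae_of_all _ fun t ht => hb t ⟨ht.1.le, ht.2⟩) hbi
  have hleft := hend le_rfl (by linarith) hxδ
  have hright := hend (p := x - δ) (by linarith) (by linarith) le_rfl
  rw [add_sub_cancel_left] at hleft
  rw [sub_sub_cancel] at hright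
  calc 2 * |∫ t in x₀..x, f t| = |2 * ∫ t in x₀..x, f t| := by rw [abs_mul, abs_two]
    _ ≤ _ := by
      rw [hdouble]
      linarith [abs_add_le ((∫ t in x₀..(x₀ + δ), f t) + (∫ t in (x - δ)..x, f t))
        (∫ t in x₀..(x - δ), (f t + f (t + δ))),
        abs_add_le (∫ t in x₀..(x₀ + δ), f t) (∫ t in (x - δ)..x, f t)]

theorem abs_comp_div_add_comp_div_le {g θ θ' : ℝ → ℝ} {a β C δ t : ℝ}
    (hg : ∀ y, |g y| ≤ 1) (hgL : LipschitzWith 1 g) (hgδ : Function.Antiperiodic g (a * δ))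
    (hβ : 0 ≤ β) (hC : 0 ≤ C) (hδ : 0 ≤ δ) (ht : 0 < t)
    (hAC : θ (t + δ) - θ t = ∫ u in t..(t + δ), θ' u)
    (hInt : IntervalIntegrable θ' volume t (t + δ))
    (hbd : ∀ᵐ u ∂volume, 0 < u → |θ' u - a| ≤ C / u ^ β) :
    |g (θ t) / t + g (θ (t + δ)) / (t + δ)| ≤ δ * t ^ (-1 - 1 : ℝ) + C * δ * t ^ (-1 - β) := by
  have hphase := abs_sub_sub_mul_sub_le hβ hC ht (le_add_of_nonneg_right hδ) hAC hInt hbd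
  rw [add_sub_cancel_left, sub_sub] at hphase
  calc _ ≤ δ / t ^ 2 + |θ (t + δ) - (θ t + a * δ)| / t :=
        abs_div_add_div_le_of_antiperiodic hg hgL hgδ ht hδ
    _ ≤ δ / t ^ 2 + C / t ^ β * δ / t := by gcongr
    _ = δ * t ^ (-1 - 1 : ℝ) + C * δ * t ^ (-1 - β) := by
      simp only [sub_eq_add_neg, rpow_add ht, rpow_neg ht.le, rpow_one]
      field_simp

theorem integral_mul_rpow_add_mul_rpow_le {β C δ p q : ℝ} (hβ : 0 < β) (hC : 0 ≤ C)
    (hδ : 0 ≤ δ) (hp : 0 < p) (hpq : p ≤ q) :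
    ∫ t in p..q, (δ * t ^ (-1 - 1 : ℝ) + C * δ * t ^ (-1 - β)) ≤ δ / p + C * δ / (β * p ^ β) := by
  have h0 : (0 : ℝ) ∉ uIcc p q := by
    rw [uIcc_of_le hpq]
    exact fun h => hp.not_ge h.1
  rw [intervalIntegral.integral_add
      ((intervalIntegral.intervalIntegrable_rpow (Or.inr h0)).const_mul δ)
      ((intervalIntegral.intervalIntegrable_rpow (Or.inr h0)).const_mul (C * δ)),
    intervalIntegral.integral_const_mul, intervalIntegral.integral_const_mul]
  have h1 := integral_rpow_neg_one_sub_le one_pos hp hpq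
  have h2 := integral_rpow_neg_one_sub_le hβ hp hpq
  rw [rpow_one, one_mul] at h1
  calc _ ≤ δ * (1 / p) + C * δ * (1 / (β * p ^ β)) := by gcongr
    _ = δ / p + C * δ / (β * p ^ β) := by ring

theorem abs_integral_comp_div_le_of_antiperiodic {g θ θ' : ℝ → ℝ} {a β C δ x₀ x : ℝ}
    (hg : ∀ y, |g y| ≤ 1) (hgL : LipschitzWith 1 g) (hgδ : Function.Antiperiodic g (a * δ))
    (hβ : 0 < β) (hC : 0 ≤ C) (hδ : 0 < δ)
    (hAC : ∀ s t : ℝ, 0 < s → s ≤ t → θ t - θ s = ∫ u in s..t, θ' u)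
    (hInt : ∀ s t : ℝ, 0 < s → s ≤ t → IntervalIntegrable θ' volume s t)
    (hbd : ∀ᵐ t ∂volume, 0 < t → |θ' t - a| ≤ C / t ^ β) (hx₀ : 0 < x₀) (hx : x₀ ≤ x) :
    |∫ t in x₀..x, g (θ t) / t| ≤ 3 / 2 * (δ / x₀) + C * δ / (2 * β * x₀ ^ β) := by
  have hθ : ContinuousOn θ (Icc x₀ x) :=
    continuousOn_Icc_of_sub_eq_integral hx (fun t ht => hAC _ _ hx₀ ht.1) (hInt _ _ hx₀ hx)
  have hf : IntervalIntegrable (fun t => g (θ t) / t) volume x₀ x :=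
    ContinuousOn.intervalIntegrable_of_Icc hx <| (hgL.continuous.comp_continuousOn hθ).div
      continuousOn_id fun t ht => (hx₀.trans_le ht.1).ne'
  have hM : ∀ t ∈ Icc x₀ x, |g (θ t) / t| ≤ 1 / x₀ := fun t ht => by
    rw [abs_div, abs_of_pos (hx₀.trans_le ht.1)]
    exact div_le_div₀ zero_le_one (hg _) hx₀ ht.1
  have hδx₀ : 1 / x₀ * δ = δ / x₀ := one_div_mul_eq_div _ _
  have hCδ : 0 ≤ C * δ / (2 * β * x₀ ^ β) := by positivity
  rcases le_or_gt x (x₀ + δ) with hshort | hlong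
  · have hbound := abs_integral_le_mul_sub_of_abs_le hx hM
    have : 1 / x₀ * (x - x₀) ≤ 1 / x₀ * δ := by gcongr; linarith
    linarith [div_pos hδ hx₀]
  have hpair : ∀ t ∈ Icc x₀ (x - δ), |g (θ t) / t + g (θ (t + δ)) / (t + δ)|
      ≤ δ * t ^ (-1 - 1 : ℝ) + C * δ * t ^ (-1 - β) := fun t ht =>
    have ht0 : 0 < t := hx₀.trans_le ht.1
    abs_comp_div_add_comp_div_le hg hgL hgδ hβ.le hC hδ.le ht0
      (hAC _ _ ht0 (le_add_of_nonneg_right hδ.le)) (hInt _ _ ht0 (le_add_of_nonneg_right hδ.le)) hbd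
  have h0 : (0 : ℝ) ∉ uIcc x₀ (x - δ) := by
    rw [uIcc_of_le (by linarith)]
    exact fun h => hx₀.not_ge h.1
  have hdouble := two_mul_abs_integral_le_of_abs_add_shift_le hδ.le hlong.le hf hM hpair
    (((intervalIntegral.intervalIntegrable_rpow (Or.inr h0)).const_mul δ).add
      ((intervalIntegral.intervalIntegrable_rpow (Or.inr h0)).const_mul (C * δ)))
  have hpair_integral :=
    integral_mul_rpow_add_mul_rpow_le (q := x - δ) hβ hC hδ.le hx₀ (by linarith)
  have : C * δ / (2 * β * x₀ ^ β) = C * δ / (β * x₀ ^ β) / 2 := by ring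
  linarith

theorem one_le_mul_of_sConst_lt {α β C x₀ : ℝ} (hα : 0 < α) (hβ : 0 < β) (hC : 0 ≤ C)
    (h : sConst α β C < x₀) : 1 ≤ α * x₀ := by
  have hbase : 1 ≤ 100 * C * α ^ (β - 1) + 10 ^ 4 := by
    have := rpow_pos_of_pos hα (β - 1); nlinarith
  calc 1 ≤ (100 * C * α ^ (β - 1) + 10 ^ 4) ^ (1 / β) := one_le_rpow hbase (by positivity)
    _ = α * sConst α β C := by rw [sConst]; field_simp
    _ ≤ α * x₀ := by gcongr

theorem oscillation_bound_le_rConst_div {α β C x₀ : ℝ} (hα : 0 < α) (hβ : β ∈ Ioc 0 1)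
    (hC : 0 ≤ C) (hαx : 1 ≤ α * x₀) :
    3 / 2 * (π / α / x₀) + C * (π / α) / (2 * β * x₀ ^ β) ≤ rConst α β C / (α ^ β * x₀ ^ β) := by
  obtain ⟨hβ0, hβ1⟩ := hβ
  have hx₀ : 0 < x₀ := pos_of_mul_pos_right (one_pos.trans_le hαx) hα.le
  have hαxβ : (α * x₀) ^ β ≤ α * x₀ := by
    simpa using rpow_le_rpow_of_exponent_le hαx hβ1
  rw [rConst, add_div, ← mul_rpow hα.le hx₀.le]
  have hfreq : C * (π / α) / (2 * β * x₀ ^ β) ≤ 30 * C / β * α ^ (β - 1) / (α * x₀) ^ β := by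
    rw [mul_rpow hα.le hx₀.le, rpow_sub_one hα.ne']
    field_simp
    rw [mul_assoc]
    gcongr
    linarith [pi_le_four]
  have hamp : 3 / 2 * (π / α / x₀) ≤ 10 * π / (α * x₀) ^ β := by
    calc 3 / 2 * (π / α / x₀) = 3 / 2 * π / (α * x₀) := by field_simp
      _ ≤ 10 * π / (α * x₀) := by gcongr; norm_num
      _ ≤ 10 * π / (α * x₀) ^ β := by gcongr
  linarith

/-- Lemma 4.2: if `|θ'(t) - a| ≤ C/t^β` a.e. on `(0,∞)` with `a ≠ 0`, then for
`x ≥ x₀ > s(|a|,β,C)`, the oscillatory integrals `∫_{x₀}^x sin θ(t)/t dt` and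
`∫_{x₀}^x cos θ(t)/t dt` are bounded by `r(|a|,β,C)/(|a|^β x₀^β)`. -/
theorem oscillatory_integral_estimate_frequency
    (β C a : ℝ) (hβ : β ∈ Set.Ioc (0:ℝ) 1) (hC : 0 < C) (ha : a ≠ 0)
    (θ θ' : ℝ → ℝ)
    (hAC : ∀ s t : ℝ, 0 < s → s ≤ t → θ t - θ s = ∫ u in s..t, θ' u)
    (hInt : ∀ s t : ℝ, 0 < s → s ≤ t → IntervalIntegrable θ' volume s t)
    (hbd : ∀ᵐ t ∂volume, 0 < t → |θ' t - a| ≤ C / t ^ β)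
    (x₀ x : ℝ) (hx₀ : sConst |a| β C < x₀) (hx : x₀ ≤ x) :
    |∫ t in x₀..x, Real.sin (θ t) / t| ≤ rConst |a| β C / (|a| ^ β * x₀ ^ β) ∧
    |∫ t in x₀..x, Real.cos (θ t) / t| ≤ rConst |a| β C / (|a| ^ β * x₀ ^ β) := by
  have hα : 0 < |a| := abs_pos.2 ha
  have hαx := one_le_mul_of_sConst_lt hα hβ.1 hC.le hx₀
  have hx₀pos : 0 < x₀ := pos_of_mul_pos_right (one_pos.trans_le hαx) hα.le
  have hperiod {g : ℝ → ℝ} (hg : Function.Antiperiodic g π) :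
      Function.Antiperiodic g (a * (π / |a|)) := by
    rcases abs_choice a with h | h <;> rw [h]
    · rwa [mul_div_cancel₀ _ ha]
    · rw [mul_div_assoc', div_neg, mul_comm, mul_div_cancel_right₀ _ ha]; exact hg.neg
  have key {g : ℝ → ℝ} (hg : ∀ y, |g y| ≤ 1) (hgL : LipschitzWith 1 g)
      (hgπ : Function.Antiperiodic g π) :
      |∫ t in x₀..x, g (θ t) / t| ≤ rConst |a| β C / (|a| ^ β * x₀ ^ β) :=
    (abs_integral_comp_div_le_of_antiperiodic hg hgL (hperiod hgπ) hβ.1 hC.le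
      (div_pos pi_pos hα) hAC hInt hbd hx₀pos hx).trans
      (oscillation_bound_le_rConst_div hα hβ hC.le hαx)
  exact ⟨key (fun _ => abs_sin_le_one _) lipschitzWith_sin sin_antiperiodic,
    key (fun _ => abs_cos_le_one _) lipschitzWith_cos cos_antiperiodic⟩
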